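/- Value at the critical subsidy δ = E: for every integer τ ≥ 1 and every integer b with 0 ≤ b ≤ k·τ (the task is finishable by offloading in every remaining slot), the value function under subsidy E equals V_E(τ,b) = E·∑_{i=0}^{τ−1} β^i = E·(1 − β^τ)/(1 − β); in particular, at subsidy E the value is the same for all finishable workloads b ≤ k·τ. -/

import Mathlib

noncomputable def F (α : ℝ) (x : ℕ) : ℝ := α * (x : ℝ) ^ 2

noncomputable def V (k : ℕ) (E α β δ : ℝ) : ℕ → ℕ → ℝ
  | 0, _ => 0
  | 1, 0 => max δ 0
  | 1, b + 1 => max (δ - F α b) (E - F α (b + 1 - k))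
  | t + 2, b =>
      max (δ + β * V k E α β δ (t + 1) (b - 1))
        ((if 1 ≤ b then E else 0) + β * V k E α β δ (t + 1) (b - k))

noncomputable def g (k : ℕ) (E α β δ : ℝ) : ℕ → ℕ → ℝ
  | 0, _ => 0
  | 1, 0 => δ
  | 1, b + 1 => δ - F α b - E + F α (b + 1 - k)
  | t + 2, b =>
      δ + β * V k E α β δ (t + 1) (b - 1) - (if 1 ≤ b then E else 0)
        - β * V k E α β δ (t + 1) (b - k)

noncomputable def whittle (k : ℕ) (E α β : ℝ) (τ b : ℕ) : ℝ :=
  sInf {δ : ℝ | 0 ≤ g k E α β δ τ b}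

/-!
At subsidy `E` the passive action earns exactly as much per slot as offloading, and penalties are
nonnegative, so `E * ∑ i < τ, β ^ i` bounds the value for every workload. When `b ≤ k * τ` the bound
is attained: offload while work remains (the backlog `b - k` stays finishable in `τ - 1` slots) and
stay passive once it is done, collecting `E` in every slot without penalty.
-/

open Finset

variable {k : ℕ} {E α β : ℝ}

lemma F_nonneg (hα : 0 ≤ α) (x : ℕ) : 0 ≤ F α x := by
  unfold F; positivity

lemma mul_geom_sum_succ (E β : ℝ) (n : ℕ) :
    E * ∑ i ∈ range (n + 1), β ^ i = E + β * (E * ∑ i ∈ range n, β ^ i) := by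
  rw [geom_sum_succ]; ring

lemma V_le_mul_geom_sum (hE : 0 ≤ E) (hα : 0 ≤ α) (hβ : 0 ≤ β) (τ b : ℕ) :
    V k E α β E τ b ≤ E * ∑ i ∈ range τ, β ^ i := by
  fun_induction V k E α β E τ b with
  | case1 => simp
  | case2 => simp [hE]
  | case3 b =>
    have := F_nonneg hα b
    have := F_nonneg hα (b + 1 - k)
    simp only [range_one, sum_singleton, pow_zero, mul_one]
    exact max_le (by linarith) (by linarith)
  | case4 t b ih₁ ih₂ =>
    have hreward : (if 1 ≤ b then E else 0) ≤ E := by split_ifs <;> simp [hE]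
    rw [mul_geom_sum_succ]
    exact max_le (by gcongr) (add_le_add hreward (by gcongr))

lemma V_eq_mul_geom_sum (hE : 0 ≤ E) (hα : 0 ≤ α) (hβ : 0 ≤ β) {τ b : ℕ} (hb : b ≤ k * τ) :
    V k E α β E τ b = E * ∑ i ∈ range τ, β ^ i := by
  fun_induction V k E α β E τ b with
  | case1 => simp
  | case2 => simp [hE]
  | case3 b =>
    have hdone : b + 1 - k = 0 := by omega
    have := F_nonneg hα b
    have hF0 : F α 0 = 0 := by simp [F]
    simp only [range_one, sum_singleton, pow_zero, mul_one, hdone, hF0, sub_zero]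
    exact max_eq_right (by linarith)
  | case4 t b ih₁ ih₂ =>
    have hbacklog : b - k ≤ k * (t + 1) := by
      rw [Nat.sub_le_iff_le_add, ← Nat.mul_succ]; exact hb
    rw [mul_geom_sum_succ, ih₂ hbacklog]
    rcases Nat.eq_zero_or_pos b with rfl | hpos
    · rw [ih₁ (Nat.zero_le _)]
      simp [hE]
    · have := V_le_mul_geom_sum (k := k) hE hα hβ (t + 1) (b - 1)
      rw [if_pos (Nat.succ_le_of_lt hpos), max_eq_right (by gcongr)]

theorem value_at_critical_subsidy_general (k : ℕ) (E α β : ℝ) (hE : 0 ≤ E) (hα : 0 < α)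
    (hβ0 : 0 < β) (hβ1 : β < 1)
    (τ b : ℕ) (hb : b ≤ k * τ) :
    V k E α β E τ b = E * ∑ i ∈ Finset.range τ, β ^ i ∧
    E * ∑ i ∈ Finset.range τ, β ^ i = E * (1 - β ^ τ) / (1 - β) := by
  refine ⟨V_eq_mul_geom_sum hE hα.le hβ0.le hb, ?_⟩
  rw [mul_div_assoc, range_eq_Ico, geom_sum_Ico' hβ1.ne (Nat.zero_le τ), pow_zero]

theorem value_at_critical_subsidy (k : ℕ) (hk : 1 ≤ k) (E α β : ℝ) (hE : 0 ≤ E) (hα : 0 < α)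
    (hβ0 : 0 < β) (hβ1 : β < 1)
    (τ b : ℕ) (hτ : 1 ≤ τ) (hb : b ≤ k * τ) :
    V k E α β E τ b = E * ∑ i ∈ Finset.range τ, β ^ i ∧
    E * ∑ i ∈ Finset.range τ, β ^ i = E * (1 - β ^ τ) / (1 - β) :=
  value_at_critical_subsidy_general k E α β hE hα hβ0 hβ1 τ b hb
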